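/- Let s ∈ (0,1), and let v : Q → ℝ be a nonnegative function on an open set Q ⊆ ℝⁿ × ℝ, differentiable in t and in the direction e ∈ 𝕊^{n−1}, satisfying 0 < ∂_t v ≤ C ∂_e v and ∂_e v ≤ C d^s on the set {v > 0} ∩ Q, where d(x,t) is a nonnegative function vanishing on {v = 0}. Suppose moreover that for some C₁, |∇_x ∂_t v| ≤ C₁ d^{s−1} on {v>0} ∩ Q. Then for every direction e and every (x,t) ∈ {v>0} ∩ Q, one has |∂_e v(x,t)|^{1−s} |∂_t ∂_e v(x,t)|^s ≤ C₂ for a constant C₂ depending only on C, C₁, s; consequently t ↦ (∂_e v(x,t))^{1/s} is Lipschitz in t with constant C₂^{1/s}/s wherever defined, and hence ∂_e v is Hölder continuous of exponent s in t. -/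

import Mathlib

/-!
On `{v > 0}` the bounds `∂_e v ≤ C d^s` and `|∂_t ∂_e v| ≤ |∇_x ∂_t v| ≤ C₁ d^{s-1}` interpolate:
in `(∂_e v)^{1-s} |∂_t ∂_e v|^s` the powers of `d` cancel, since `s(1-s) + (s-1)s = 0`. Raising
to the power `1/s`, this product is `s |∂_t (∂_e v)^{1/s}|`, so `(∂_e v)^{1/s}` is Lipschitz in `t`,
and `∂_e v` inherits `s`-Hölder continuity because `x ↦ x^s` is `s`-Hölder on `[0, ∞)`.
-/

open scoped RealInnerProductSpace

namespace Real

theorem abs_rpow_sub_rpow_le {a b s : ℝ} (ha : 0 ≤ a) (hb : 0 ≤ b) (hs0 : 0 ≤ s) (hs1 : s ≤ 1) :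
    |a ^ s - b ^ s| ≤ |a - b| ^ s := by
  wlog hba : b ≤ a generalizing a b
  · rw [abs_sub_comm, abs_sub_comm a b]
    exact this hb ha (le_of_not_ge hba)
  have hsub : a ^ s ≤ (a - b) ^ s + b ^ s := by
    simpa using rpow_add_le_add_rpow (sub_nonneg.2 hba) hb hs0 hs1
  rw [abs_of_nonneg (sub_nonneg.2 (rpow_le_rpow hb hba hs0)), abs_of_nonneg (sub_nonneg.2 hba)]
  linarith

theorem abs_sub_le_of_abs_rpow_one_div_sub_le {a b s L : ℝ} (ha : 0 ≤ a) (hb : 0 ≤ b)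
    (hs0 : 0 < s) (hs1 : s ≤ 1) (h : |a ^ (1 / s) - b ^ (1 / s)| ≤ L) :
    |a - b| ≤ L ^ s := by
  have hinv : ∀ x : ℝ, 0 ≤ x → (x ^ (1 / s)) ^ s = x := fun x hx => by
    rw [← rpow_mul hx, one_div_mul_cancel hs0.ne', rpow_one]
  calc |a - b| = |(a ^ (1 / s)) ^ s - (b ^ (1 / s)) ^ s| := by rw [hinv a ha, hinv b hb]
    _ ≤ |a ^ (1 / s) - b ^ (1 / s)| ^ s :=
      abs_rpow_sub_rpow_le (rpow_nonneg ha _) (rpow_nonneg hb _) hs0.le hs1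
    _ ≤ L ^ s := rpow_le_rpow (abs_nonneg _) h hs0.le

theorem rpow_one_sub_mul_rpow_le {a b d C C₁ s : ℝ} (ha : 0 ≤ a) (hb : 0 ≤ b) (hd : 0 < d)
    (hs0 : 0 ≤ s) (hs1 : s ≤ 1) (haC : a ≤ C * d ^ s) (hbC : b ≤ C₁ * d ^ (s - 1)) :
    a ^ (1 - s) * b ^ s ≤ C ^ (1 - s) * C₁ ^ s := by
  have hC : 0 ≤ C := nonneg_of_mul_nonneg_left (ha.trans haC) (rpow_pos_of_pos hd s)
  have hC₁ : 0 ≤ C₁ := nonneg_of_mul_nonneg_left (hb.trans hbC) (rpow_pos_of_pos hd _)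
  have hcancel : (d ^ s) ^ (1 - s) * (d ^ (s - 1)) ^ s = 1 := by
    rw [← rpow_mul hd.le, ← rpow_mul hd.le, ← rpow_add hd]
    simp [show s * (1 - s) + (s - 1) * s = 0 by ring]
  calc a ^ (1 - s) * b ^ s ≤ (C * d ^ s) ^ (1 - s) * (C₁ * d ^ (s - 1)) ^ s := by
        gcongr
    _ = C ^ (1 - s) * C₁ ^ s * ((d ^ s) ^ (1 - s) * (d ^ (s - 1)) ^ s) := by
        rw [mul_rpow hC (by positivity), mul_rpow hC₁ (by positivity)]
        ring
    _ = C ^ (1 - s) * C₁ ^ s := by rw [hcancel, mul_one]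

theorem rpow_one_sub_mul_rpow_rpow_one_div {a b s : ℝ} (ha : 0 ≤ a) (hb : 0 ≤ b) (hs : s ≠ 0) :
    (a ^ (1 - s) * b ^ s) ^ (1 / s) = a ^ (1 / s - 1) * b := by
  rw [mul_rpow (by positivity) (by positivity), ← rpow_mul ha, ← rpow_mul hb,
    mul_one_div_cancel hs, rpow_one]
  congr 2
  field_simp

end Real

open Real Set in
theorem abs_rpow_one_div_sub_le_of_rpow_one_sub_mul_rpow_deriv_le {f f' : ℝ → ℝ}
    {s M t₁ t₂ : ℝ} (hs : 0 < s) (hf : ∀ τ ∈ uIcc t₁ t₂, 0 < f τ)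
    (hf' : ∀ τ ∈ uIcc t₁ t₂, HasDerivAt f (f' τ) τ)
    (hM : ∀ τ ∈ uIcc t₁ t₂, f τ ^ (1 - s) * |f' τ| ^ s ≤ M) :
    |f t₁ ^ (1 / s) - f t₂ ^ (1 / s)| ≤ M ^ (1 / s) / s * |t₁ - t₂| := by
  have hderiv : ∀ τ ∈ uIcc t₁ t₂, HasDerivWithinAt (fun τ => f τ ^ (1 / s))
      (f' τ * (1 / s) * f τ ^ (1 / s - 1)) (uIcc t₁ t₂) τ := fun τ hτ =>
    ((hf' τ hτ).rpow_const (Or.inl (hf τ hτ).ne')).hasDerivWithinAt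
  have hbound : ∀ τ ∈ uIcc t₁ t₂, ‖f' τ * (1 / s) * f τ ^ (1 / s - 1)‖ ≤ M ^ (1 / s) / s := by
    intro τ hτ
    have hpow := rpow_le_rpow
      (mul_nonneg (rpow_nonneg (hf τ hτ).le _) (rpow_nonneg (abs_nonneg _) _)) (hM τ hτ) (one_div_pos.2 hs).le
    rw [rpow_one_sub_mul_rpow_rpow_one_div (hf τ hτ).le (abs_nonneg _) hs.ne'] at hpow
    rw [norm_eq_abs, abs_mul, abs_mul, abs_of_pos (one_div_pos.2 hs),
      abs_of_pos (rpow_pos_of_pos (hf τ hτ) _)]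
    calc |f' τ| * (1 / s) * f τ ^ (1 / s - 1) = f τ ^ (1 / s - 1) * |f' τ| / s := by ring
      _ ≤ M ^ (1 / s) / s := by gcongr
  simpa [norm_eq_abs] using (convex_uIcc t₁ t₂).norm_image_sub_le_of_norm_hasDerivWithin_le
    hderiv hbound right_mem_uIcc left_mem_uIcc

open Real in
theorem stmt_11_general (n : ℕ) (s C C₁ : ℝ) (hs : s ∈ Set.Ioo (0 : ℝ) 1) (hC : 0 < C)
    (hC₁ : 0 < C₁)
    (Q : Set (EuclideanSpace ℝ (Fin n) × ℝ))
    (e : EuclideanSpace ℝ (Fin n)) (he : ‖e‖ = 1)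
    (v d : EuclideanSpace ℝ (Fin n) → ℝ → ℝ)
    (vt ve vet : EuclideanSpace ℝ (Fin n) → ℝ → ℝ)
    (gvt : EuclideanSpace ℝ (Fin n) → ℝ → EuclideanSpace ℝ (Fin n))
    (hd_nonneg : ∀ p ∈ Q, 0 ≤ d p.1 p.2)
    (hdiff : ∀ p ∈ Q, 0 < v p.1 p.2 →
      HasDerivAt (fun τ => v p.1 τ) (vt p.1 p.2) p.2 ∧
      HasDerivAt (fun h : ℝ => v (p.1 + h • e) p.2) (ve p.1 p.2) 0 ∧
      HasGradientAt (fun z => vt z p.2) (gvt p.1 p.2) p.1 ∧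
      HasDerivAt (fun τ => ve p.1 τ) (vet p.1 p.2) p.2)
    (hmix : ∀ p ∈ Q, 0 < v p.1 p.2 → vet p.1 p.2 = ⟪gvt p.1 p.2, e⟫)
    (hvt_pos : ∀ p ∈ Q, 0 < v p.1 p.2 → 0 < vt p.1 p.2)
    (hvt_le : ∀ p ∈ Q, 0 < v p.1 p.2 → vt p.1 p.2 ≤ C * ve p.1 p.2)
    (hve_le : ∀ p ∈ Q, 0 < v p.1 p.2 → ve p.1 p.2 ≤ C * (d p.1 p.2) ^ s)
    (hgvt_le : ∀ p ∈ Q, 0 < v p.1 p.2 → ‖gvt p.1 p.2‖ ≤ C₁ * (d p.1 p.2) ^ (s - 1)) :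
    ∃ C₂ > (0 : ℝ),
      (∀ p ∈ Q, 0 < v p.1 p.2 →
        (ve p.1 p.2) ^ (1 - s) * |vet p.1 p.2| ^ s ≤ C₂) ∧
      (∀ (x : EuclideanSpace ℝ (Fin n)) (t₁ t₂ : ℝ),
        (∀ τ ∈ Set.uIcc t₁ t₂, (x, τ) ∈ Q ∧ 0 < v x τ) →
        |(ve x t₁) ^ (1 / s) - (ve x t₂) ^ (1 / s)| ≤ C₂ ^ (1 / s) / s * |t₁ - t₂| ∧
        |ve x t₁ - ve x t₂| ≤ (C₂ ^ (1 / s) / s) ^ s * |t₁ - t₂| ^ s) := by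
  obtain ⟨hs0, hs1⟩ := hs
  have hve_pos : ∀ p ∈ Q, 0 < v p.1 p.2 → 0 < ve p.1 p.2 := fun p hp hv =>
    pos_of_mul_pos_right ((hvt_pos p hp hv).trans_le (hvt_le p hp hv)) hC.le
  have hd_pos : ∀ p ∈ Q, 0 < v p.1 p.2 → 0 < d p.1 p.2 := fun p hp hv => by
    refine (hd_nonneg p hp).lt_of_ne' fun hd => (hve_pos p hp hv).not_ge ?_
    simpa [hd, zero_rpow hs0.ne'] using hve_le p hp hv
  have hvet_le : ∀ p ∈ Q, 0 < v p.1 p.2 → |vet p.1 p.2| ≤ C₁ * d p.1 p.2 ^ (s - 1) :=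
    fun p hp hv => by
      rw [hmix p hp hv]
      exact (abs_real_inner_le_norm _ _).trans (by simpa [he] using hgvt_le p hp hv)
  have hinterp : ∀ p ∈ Q, 0 < v p.1 p.2 →
      ve p.1 p.2 ^ (1 - s) * |vet p.1 p.2| ^ s ≤ C ^ (1 - s) * C₁ ^ s := fun p hp hv =>
    rpow_one_sub_mul_rpow_le (hve_pos p hp hv).le (abs_nonneg _) (hd_pos p hp hv) hs0.le hs1.le
      (hve_le p hp hv) (hvet_le p hp hv)
  refine ⟨_, by positivity, hinterp, fun x t₁ t₂ hx => ?_⟩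
  have hLip := abs_rpow_one_div_sub_le_of_rpow_one_sub_mul_rpow_deriv_le hs0
    (fun τ hτ => hve_pos (x, τ) (hx τ hτ).1 (hx τ hτ).2)
    (fun τ hτ => (hdiff (x, τ) (hx τ hτ).1 (hx τ hτ).2).2.2.2)
    (fun τ hτ => hinterp (x, τ) (hx τ hτ).1 (hx τ hτ).2)
  refine ⟨hLip, ?_⟩
  rw [← mul_rpow (by positivity) (abs_nonneg _)]
  exact abs_sub_le_of_abs_rpow_one_div_sub_le
    (hve_pos (x, t₁) (hx t₁ Set.left_mem_uIcc).1 (hx t₁ Set.left_mem_uIcc).2).le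
    (hve_pos (x, t₂) (hx t₂ Set.right_mem_uIcc).1 (hx t₂ Set.right_mem_uIcc).2).le
    hs0 hs1.le hLip

/-- Interpolation argument of Proposition 5.4: from `0 < ∂_t v ≤ C ∂_e v`,
`∂_e v ≤ C d^s` and `|∇_x ∂_t v| ≤ C₁ d^{s−1}` on `{v > 0} ∩ Q` one gets
`(∂_e v)^{1−s} |∂_t ∂_e v|^s ≤ C₂`, hence `t ↦ (∂_e v)^{1/s}` is Lipschitz with
constant `C₂^{1/s}/s`, and `∂_e v` is `s`-Hölder in `t`. -/
theorem stmt_11 (n : ℕ) (s C C₁ : ℝ) (hs : s ∈ Set.Ioo (0 : ℝ) 1) (hC : 0 < C)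
    (hC₁ : 0 < C₁)
    (Q : Set (EuclideanSpace ℝ (Fin n) × ℝ)) (hQ : IsOpen Q)
    (e : EuclideanSpace ℝ (Fin n)) (he : ‖e‖ = 1)
    (v d : EuclideanSpace ℝ (Fin n) → ℝ → ℝ)
    (vt ve vet : EuclideanSpace ℝ (Fin n) → ℝ → ℝ)
    (gvt : EuclideanSpace ℝ (Fin n) → ℝ → EuclideanSpace ℝ (Fin n))
    (hv_nonneg : ∀ p ∈ Q, 0 ≤ v p.1 p.2)
    (hd_nonneg : ∀ p ∈ Q, 0 ≤ d p.1 p.2)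
    (hd_vanish : ∀ p ∈ Q, v p.1 p.2 = 0 → d p.1 p.2 = 0)
    (hdiff : ∀ p ∈ Q, 0 < v p.1 p.2 →
      HasDerivAt (fun τ => v p.1 τ) (vt p.1 p.2) p.2 ∧
      HasDerivAt (fun h : ℝ => v (p.1 + h • e) p.2) (ve p.1 p.2) 0 ∧
      HasGradientAt (fun z => vt z p.2) (gvt p.1 p.2) p.1 ∧
      HasDerivAt (fun τ => ve p.1 τ) (vet p.1 p.2) p.2)
    (hmix : ∀ p ∈ Q, 0 < v p.1 p.2 → vet p.1 p.2 = ⟪gvt p.1 p.2, e⟫)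
    (hvt_pos : ∀ p ∈ Q, 0 < v p.1 p.2 → 0 < vt p.1 p.2)
    (hvt_le : ∀ p ∈ Q, 0 < v p.1 p.2 → vt p.1 p.2 ≤ C * ve p.1 p.2)
    (hve_le : ∀ p ∈ Q, 0 < v p.1 p.2 → ve p.1 p.2 ≤ C * (d p.1 p.2) ^ s)
    (hgvt_le : ∀ p ∈ Q, 0 < v p.1 p.2 → ‖gvt p.1 p.2‖ ≤ C₁ * (d p.1 p.2) ^ (s - 1)) :
    ∃ C₂ > (0 : ℝ),
      (∀ p ∈ Q, 0 < v p.1 p.2 →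
        (ve p.1 p.2) ^ (1 - s) * |vet p.1 p.2| ^ s ≤ C₂) ∧
      (∀ (x : EuclideanSpace ℝ (Fin n)) (t₁ t₂ : ℝ),
        (∀ τ ∈ Set.uIcc t₁ t₂, (x, τ) ∈ Q ∧ 0 < v x τ) →
        |(ve x t₁) ^ (1 / s) - (ve x t₂) ^ (1 / s)| ≤ C₂ ^ (1 / s) / s * |t₁ - t₂| ∧
        |ve x t₁ - ve x t₂| ≤ (C₂ ^ (1 / s) / s) ^ s * |t₁ - t₂| ^ s) :=
  stmt_11_general n s C C₁ hs hC hC₁ Q e he v d vt ve vet gvt hd_nonneg hdiff hmix hvt_pos hvt_le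
    hve_le hgvt_le
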